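/- If 2b is not a nonnegative integer, then the sl₂(ℂ)-module M_b on ℂ[h] (h acting by multiplication, e·f(h) = (h+b)f(h-1), f·g(h) = -(h-b)g(h+1)) is simple. -/

import Mathlib

/-!
A subspace `V` stable under multiplication by `h` is an ideal of the principal ideal ring
`ℂ[h]`, generated by some `g ≠ 0`. Evaluating `g ∣ e·g` and `g ∣ f·g` at a root `x` of `g`
shows that `x - 1` is again a root unless `x = -b`, and `x + 1` is again a root unless
`x = b`. As `g` has finitely many roots, walking down from a root reaches the root `-b`,
and walking up from `-b` must stop at some `-b + m = b`, i.e. `2b = m`. Hence `g` has no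
roots, so it is a unit and `V = ℂ[h]`.
-/

open Polynomial

namespace Polynomial

variable {R : Type*}

theorem mul_mem_of_forall_X_mul_mem [CommSemiring R] (V : Submodule R R[X])
    (hX : ∀ f ∈ V, X * f ∈ V) (p : R[X]) {f : R[X]} (hf : f ∈ V) : p * f ∈ V := by
  induction p using Polynomial.induction_on with
  | C a => simpa only [← smul_eq_C_mul] using V.smul_mem a hf
  | add p q hp hq => simpa only [add_mul] using V.add_mem hp hq
  | monomial n a ih => simpa only [pow_succ, mul_assoc, mul_left_comm _ X] using hX _ ih

def idealOfXMulMem [CommSemiring R] (V : Submodule R R[X]) (hX : ∀ f ∈ V, X * f ∈ V) :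
    Ideal R[X] where
  carrier := V
  add_mem' := V.add_mem
  zero_mem' := V.zero_mem
  smul_mem' p _ hf := mul_mem_of_forall_X_mul_mem V hX p hf

theorem exists_isRoot_and_not_isRoot_add [CommRing R] [IsDomain R] [CharZero R] {g : R[X]}
    (hg : g ≠ 0) {a d : R} (hd : d ≠ 0) (ha : g.IsRoot a) :
    ∃ k : ℕ, g.IsRoot (a + k * d) ∧ ¬ g.IsRoot (a + k * d + d) := by
  by_contra! hstep
  have hroots : ∀ k : ℕ, g.IsRoot (a + k * d) := by
    intro k
    induction k with
    | zero => simpa using ha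
    | succ k ih => simpa only [Nat.cast_succ, add_mul, one_mul, ← add_assoc] using hstep k ih
  have hinj : Function.Injective fun k : ℕ => a + k * d := fun k l hkl => by
    simpa only [add_right_inj, mul_left_inj' hd, Nat.cast_inj] using hkl
  exact (Set.infinite_of_injective_forall_mem hinj hroots) (finite_setOfPred_isRoot hg)

theorem not_isRoot_of_shift_relations [CommRing R] [IsDomain R] [CharZero R] {g : R[X]}
    (hg : g ≠ 0) {b : R} (hb : ∀ m : ℕ, 2 * b ≠ m)
    (hdown : ∀ x, g.IsRoot x → (x + b) * g.eval (x - 1) = 0)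
    (hup : ∀ x, g.IsRoot x → (x - b) * g.eval (x + 1) = 0) (r : R) : ¬ g.IsRoot r := by
  intro hr
  have hneg_b : g.IsRoot (-b) := by
    obtain ⟨k, hk, hk_next⟩ := exists_isRoot_and_not_isRoot_add hg (neg_ne_zero.2 one_ne_zero) hr
    have hdown_k := hdown _ hk
    rw [← sub_eq_add_neg] at hk_next
    rcases mul_eq_zero.1 hdown_k with h | h
    · rwa [← eq_neg_of_add_eq_zero_left h]
    · exact absurd h hk_next
  obtain ⟨m, hm, hm_next⟩ := exists_isRoot_and_not_isRoot_add hg one_ne_zero hneg_b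
  rcases mul_eq_zero.1 (hup _ hm) with h | h
  · exact hb m (by linear_combination -h)
  · exact hm_next h

end Polynomial

/-- If `2b` is not a nonnegative integer, then the `sl₂(ℂ)`-module `M_b` on `ℂ[h]`
(`h` acting by multiplication, `e·f(h) = (h+b)f(h-1)`, `f·g(h) = -(h-b)g(h+1)`) is
simple: any nonzero subspace invariant under the three actions is everything. -/
theorem Mb_simple (b : ℂ) (hb : ∀ m : ℕ, 2 * b ≠ (m : ℂ)) (V : Submodule ℂ ℂ[X])
    (hH : ∀ f ∈ V, X * f ∈ V)
    (hE : ∀ f ∈ V, (X + C b) * f.comp (X - 1) ∈ V)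
    (hF : ∀ f ∈ V, -(X - C b) * f.comp (X + 1) ∈ V)
    (hV : V ≠ ⊥) : V = ⊤ := by
  set I := idealOfXMulMem V hH
  set g := Submodule.IsPrincipal.generator I
  have hgV : g ∈ V := Submodule.IsPrincipal.generator_mem I
  have hg_dvd : ∀ f ∈ V, g ∣ f := fun f hf => (Submodule.IsPrincipal.mem_iff_generator_dvd I).1 hf
  have hg0 : g ≠ 0 := fun h => hV <| by
    rw [Submodule.eq_bot_iff]
    intro f hf
    simpa [h] using hg_dvd f hf
  have hdown : ∀ x, g.IsRoot x → (x + b) * g.eval (x - 1) = 0 := fun x hx => by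
    simpa using hx.dvd (hg_dvd _ (hE g hgV))
  have hup : ∀ x, g.IsRoot x → (x - b) * g.eval (x + 1) = 0 := fun x hx => by
    have h := (hx.dvd (hg_dvd _ (hF g hgV))).eq_zero
    simp only [eval_mul, eval_neg, eval_sub, eval_X, eval_C, eval_comp, eval_add, eval_one] at h
    linear_combination -h
  have hg_unit : IsUnit g := isUnit_iff_degree_eq_zero.2 <| by
    by_contra hdeg
    obtain ⟨x, hx⟩ := IsAlgClosed.exists_root g hdeg
    exact not_isRoot_of_shift_relations hg0 hb hdown hup x hx
  have hI : I = ⊤ := Ideal.eq_top_of_isUnit_mem I hgV hg_unit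
  exact eq_top_iff.2 fun f _ => show f ∈ I from hI ▸ Submodule.mem_top
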